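/- arXiv:2005.12020 — 2 statements merged into one kernel-verified Lean document; each statement's English description precedes it below -/
import Mathlib

section
/- Brezzi-type stability (finite-dimensional version): Let V, M be finite-dimensional real inner product spaces, a : V × V → ℝ a bilinear form that is coercive on V (a(v,v) ≥ α‖v‖² for all v, α > 0) and bounded, and b : M × V → ℝ a bounded bilinear form satisfying the inf-sup condition: for every μ ∈ M, sup_{v≠0} b(μ,v)/‖v‖ ≥ β‖μ‖ with β > 0. Then for every pair of linear functionals (f, g) on V and M, the saddle point problem a(u,v) + b(λ,v) = f(v) for all v ∈ V and b(μ,u) = g(μ) for all μ ∈ M has a unique solution (u, λ) ∈ V × M. -/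
/-!
The saddle point problem is the equation `T (u, λ) = (f, g)` for the linear operator
`T (u, λ) = (a u + b λ, bᵀ u)` from `V × M` to its dual `V* × M*`, a space of the same finite
dimension, so it suffices that `T` be injective. If `T (u, λ) = 0` then `bᵀ u = 0`, hence
`a(u, u) = -b(λ, u) = 0` and coercivity gives `u = 0`; then `b λ = 0`, and the inf-sup
condition gives `λ = 0`.
-/

open Module

section SaddlePoint

variable {K V M : Type*} [Field K] [AddCommGroup V] [Module K V] [AddCommGroup M] [Module K M]

def saddlePointOperator (a : V →ₗ[K] V →ₗ[K] K) (b : M →ₗ[K] V →ₗ[K] K) :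
    V × M →ₗ[K] Dual K V × Dual K M :=
  (a ∘ₗ LinearMap.fst K V M + b ∘ₗ LinearMap.snd K V M).prod (b.flip ∘ₗ LinearMap.fst K V M)

variable (a : V →ₗ[K] V →ₗ[K] K) (b : M →ₗ[K] V →ₗ[K] K)

theorem saddlePointOperator_apply_eq_iff (p : V × M) (f : Dual K V) (g : Dual K M) :
    saddlePointOperator a b p = (f, g) ↔
      (∀ v, a p.1 v + b p.2 v = f v) ∧ (∀ μ, b μ p.1 = g μ) := by
  simp only [saddlePointOperator, Prod.ext_iff, LinearMap.ext_iff]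
  rfl

theorem saddlePointOperator_injective (ha : ∀ v, a v v = 0 → v = 0)
    (hb : Function.Injective b) : Function.Injective (saddlePointOperator a b) := by
  rw [← LinearMap.ker_eq_bot, LinearMap.ker_eq_bot']
  rintro ⟨u, l⟩ hul
  obtain ⟨hab, hbu⟩ := (saddlePointOperator_apply_eq_iff a b _ 0 0).mp hul
  have hu : u = 0 := ha u (by simpa [hbu l] using hab u)
  subst hu
  have hl : l = 0 := hb <| by ext v; simpa using hab v
  rw [hl, Prod.mk_zero_zero]

theorem saddlePointOperator_bijective [FiniteDimensional K V] [FiniteDimensional K M]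
    (ha : ∀ v, a v v = 0 → v = 0) (hb : Function.Injective b) :
    Function.Bijective (saddlePointOperator a b) := by
  have hinj := saddlePointOperator_injective a b ha hb
  have hdim : finrank K (V × M) = finrank K (Dual K V × Dual K M) := by
    simp only [finrank_prod, Subspace.dual_finrank_eq]
  exact ⟨hinj, (LinearMap.injective_iff_surjective_of_finrank_eq_finrank hdim).mp hinj⟩

end SaddlePoint

section Stability

variable {V M : Type*} [NormedAddCommGroup V] [Module ℝ V]
  [NormedAddCommGroup M] [Module ℝ M]

theorem eq_zero_of_coercive {a : V →ₗ[ℝ] V →ₗ[ℝ] ℝ} {α : ℝ} (hα : 0 < α)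
    (hcoer : ∀ v, a v v ≥ α * ‖v‖ ^ 2) {v : V} (hv : a v v = 0) : v = 0 := by
  have hle : α * ‖v‖ ^ 2 ≤ 0 := hv ▸ hcoer v
  have hsq : ‖v‖ ^ 2 = 0 := le_antisymm (nonpos_of_mul_nonpos_right hle hα) (sq_nonneg _)
  simpa using hsq

theorem injective_of_infSup {b : M →ₗ[ℝ] V →ₗ[ℝ] ℝ} {β : ℝ} (hβ : 0 < β)
    (hinfsup : ∀ μ : M, ∃ v : V, v ≠ 0 ∧ b μ v ≥ β * ‖μ‖ * ‖v‖) : Function.Injective b := by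
  rw [← LinearMap.ker_eq_bot, LinearMap.ker_eq_bot']
  intro μ hμ
  obtain ⟨v, hv, hbv⟩ := hinfsup μ
  rw [hμ, LinearMap.zero_apply] at hbv
  have : β * ‖μ‖ * ‖v‖ ≤ 0 := hbv
  exact norm_eq_zero.mp <| le_antisymm
    (nonpos_of_mul_nonpos_right (nonpos_of_mul_nonpos_left this (norm_pos_iff.mpr hv)) hβ)
    (norm_nonneg μ)

end Stability

theorem brezzi_finite_dimensional_general {V M : Type*}
    [NormedAddCommGroup V] [InnerProductSpace ℝ V] [FiniteDimensional ℝ V]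
    [NormedAddCommGroup M] [InnerProductSpace ℝ M] [FiniteDimensional ℝ M]
    (a : V →ₗ[ℝ] V →ₗ[ℝ] ℝ) (b : M →ₗ[ℝ] V →ₗ[ℝ] ℝ)
    (α β : ℝ) (hα : 0 < α) (hβ : 0 < β)
    (hcoer : ∀ v, a v v ≥ α * ‖v‖ ^ 2)
    (hinfsup : ∀ μ : M, ∃ v : V, v ≠ 0 ∧ b μ v ≥ β * ‖μ‖ * ‖v‖)
    (f : V →ₗ[ℝ] ℝ) (g : M →ₗ[ℝ] ℝ) :
    ∃! p : V × M, (∀ v, a p.1 v + b p.2 v = f v) ∧ (∀ μ, b μ p.1 = g μ) := by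
  have hT := saddlePointOperator_bijective a b (fun _ => eq_zero_of_coercive hα hcoer)
    (injective_of_infSup hβ hinfsup)
  simpa only [saddlePointOperator_apply_eq_iff] using hT.existsUnique (f, g)

/-- Brezzi-type stability, finite-dimensional version: with `a` coercive and
bounded on `V`, `b` bounded on `M × V` and satisfying the inf-sup condition,
the saddle point problem has a unique solution `(u, λ)` for any data `(f, g)`. -/
theorem brezzi_finite_dimensional {V M : Type*}
    [NormedAddCommGroup V] [InnerProductSpace ℝ V] [FiniteDimensional ℝ V]
    [NormedAddCommGroup M] [InnerProductSpace ℝ M] [FiniteDimensional ℝ M]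
    (a : V →ₗ[ℝ] V →ₗ[ℝ] ℝ) (b : M →ₗ[ℝ] V →ₗ[ℝ] ℝ)
    (α β Ca Cb : ℝ) (hα : 0 < α) (hβ : 0 < β)
    (hcoer : ∀ v, a v v ≥ α * ‖v‖ ^ 2)
    (habd : ∀ u v, |a u v| ≤ Ca * ‖u‖ * ‖v‖)
    (hbbd : ∀ μ v, |b μ v| ≤ Cb * ‖μ‖ * ‖v‖)
    (hinfsup : ∀ μ : M, ∃ v : V, v ≠ 0 ∧ b μ v ≥ β * ‖μ‖ * ‖v‖)
    (f : V →ₗ[ℝ] ℝ) (g : M →ₗ[ℝ] ℝ) :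
    ∃! p : V × M, (∀ v, a p.1 v + b p.2 v = f v) ∧ (∀ μ, b μ p.1 = g μ) :=
  brezzi_finite_dimensional_general a b α β hα hβ hcoer hinfsup f g
end

section
/- The eigenvalues σ_n from the previous statement satisfy σ_n ≤ σ₀ · C/(1+n) for a constant C depending only on R₁, R₂, and each σ_n > 0; moreover σ_n · (1 + n²)^{1/2} is bounded above and below by positive constants independent of n, which expresses that the Neumann-to-Dirichlet map S₁ is bounded and coercive between the Fourier norms of order −1/2 and 1/2. -/
/-! For `n ≥ 1` the factor `(1 - q^{2n}) / (1 + q^{2n})` lies between `(1 - q²) / 2` and `1`, so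
`σ_n` is squeezed between two multiples of `1 / n`; since `n ≤ √(1 + n²) ≤ √2 n` for `n ≥ 1`, and
`σ₀ > 0` because `R₂ / R₁ > 1`, all three bounds follow. -/

open Real

lemma le_sqrt_one_add_sq (x : ℝ) : x ≤ √(1 + x ^ 2) :=
  Real.le_sqrt_of_sq_le (by linarith)

lemma sqrt_one_add_sq_le {x : ℝ} (hx : 1 ≤ x) : √(1 + x ^ 2) ≤ √2 * x := by
  rw [Real.sqrt_le_left (by positivity), mul_pow, Real.sq_sqrt zero_le_two]
  nlinarith

lemma le_mul_sqrt_one_add_sq_of_div_le {c s x : ℝ} (hc : 0 ≤ c) (hx : 0 < x) (hs : c / x ≤ s) :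
    c ≤ s * √(1 + x ^ 2) :=
  calc c ≤ s * x := (div_le_iff₀ hx).1 hs
    _ ≤ s * √(1 + x ^ 2) :=
      mul_le_mul_of_nonneg_left (le_sqrt_one_add_sq x) ((div_nonneg hc hx.le).trans hs)

lemma mul_sqrt_one_add_sq_le_of_le_div {C s x : ℝ} (hx : 1 ≤ x) (hs₀ : 0 ≤ s) (hs : s ≤ C / x) :
    s * √(1 + x ^ 2) ≤ √2 * C :=
  calc s * √(1 + x ^ 2) ≤ C / x * (√2 * x) :=
        mul_le_mul hs (sqrt_one_add_sq_le hx) (Real.sqrt_nonneg _) (hs₀.trans hs)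
    _ = √2 * C := by field_simp

lemma one_sub_div_one_add_le_one {x : ℝ} (hx : 0 ≤ x) : (1 - x) / (1 + x) ≤ 1 :=
  div_le_one_of_le₀ (by linarith) (by linarith)

lemma half_one_sub_le_one_sub_div_one_add {x a : ℝ} (hx : 0 ≤ x) (hxa : x ≤ a) (ha : a ≤ 1) :
    (1 - a) / 2 ≤ (1 - x) / (1 + x) :=
  div_le_div₀ (by linarith) (by linarith) (by linarith) (by linarith)

section InvNatBounds

variable {σ : ℕ → ℝ} {c C : ℝ}

lemma pos_of_div_natCast_le (h₀ : 0 < σ 0) (hc : 0 < c) (hlow : ∀ n : ℕ, 1 ≤ n → c / n ≤ σ n)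
    (n : ℕ) : 0 < σ n := by
  rcases Nat.eq_zero_or_pos n with rfl | hn
  · exact h₀
  · exact (div_pos hc (by exact_mod_cast hn)).trans_le (hlow n hn)

lemma le_div_one_add_of_le_div_natCast (h₀ : 0 ≤ σ 0) (hC : 0 ≤ C)
    (hup : ∀ n : ℕ, 1 ≤ n → σ n ≤ C / n) (n : ℕ) : σ n ≤ (σ 0 + 2 * C) / (1 + n) := by
  rcases Nat.eq_zero_or_pos n with rfl | hn
  · simp only [Nat.cast_zero, add_zero, div_one]
    linarith
  · have hn₁ : (1 : ℝ) ≤ n := by exact_mod_cast hn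
    calc σ n ≤ C / n := hup n hn
      _ ≤ 2 * C / (1 + n) := by
        rw [div_le_div_iff₀ (by linarith) (by linarith)]
        nlinarith
      _ ≤ (σ 0 + 2 * C) / (1 + n) := by gcongr; linarith

lemma exists_bounds_mul_sqrt_one_add_sq (h₀ : 0 < σ 0) (hc : 0 < c)
    (hlow : ∀ n : ℕ, 1 ≤ n → c / n ≤ σ n) (hup : ∀ n : ℕ, 1 ≤ n → σ n ≤ C / n) :
    ∃ c C : ℝ, 0 < c ∧ c ≤ C ∧ ∀ n : ℕ,
      c ≤ σ n * √(1 + (n : ℝ) ^ 2) ∧ σ n * √(1 + (n : ℝ) ^ 2) ≤ C := by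
  refine ⟨min (σ 0) c, max (σ 0) (√2 * C), lt_min h₀ hc,
    (min_le_left _ _).trans (le_max_left _ _), fun n => ?_⟩
  rcases Nat.eq_zero_or_pos n with rfl | hn
  · simp only [Nat.cast_zero, ne_eq, OfNat.ofNat_ne_zero, not_false_eq_true, zero_pow, add_zero,
      Real.sqrt_one, mul_one]
    exact ⟨min_le_left _ _, le_max_left _ _⟩
  · have hn₁ : (1 : ℝ) ≤ n := by exact_mod_cast hn
    exact ⟨(min_le_right _ _).trans
        (le_mul_sqrt_one_add_sq_of_div_le hc.le (by linarith) (hlow n hn)),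
      (mul_sqrt_one_add_sq_le_of_le_div hn₁ (pos_of_div_natCast_le h₀ hc hlow n).le
        (hup n hn)).trans (le_max_right _ _)⟩

end InvNatBounds

lemma one_sub_pow_div_one_add_pow_bounds {q : ℝ} (hq₀ : 0 ≤ q) (hq₁ : q ≤ 1) {n : ℕ} (hn : 1 ≤ n) :
    (1 - q ^ 2) / 2 ≤ (1 - q ^ (2 * n)) / (1 + q ^ (2 * n)) ∧
      (1 - q ^ (2 * n)) / (1 + q ^ (2 * n)) ≤ 1 :=
  ⟨half_one_sub_le_one_sub_div_one_add (by positivity)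
      (pow_le_pow_of_le_one hq₀ hq₁ (by omega)) (pow_le_one₀ hq₀ hq₁),
    one_sub_div_one_add_le_one (by positivity)⟩

/-- The Neumann-to-Dirichlet eigenvalues `σ₀ = R₁ ln(R₂/R₁)`,
`σ_n = (R₁/n)(1 − q^{2n})/(1 + q^{2n})` (`q = R₁/R₂`) are positive, satisfy
`σ_n ≤ σ₀ C'/(1+n)`, and `σ_n √(1+n²)` is bounded above and below by positive
constants depending only on `R₁, R₂`. -/
theorem ntd_eigenvalue_bounds (R₁ R₂ : ℝ) (h1 : 0 < R₁) (h12 : R₁ < R₂)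
    (σ : ℕ → ℝ)
    (hσ0 : σ 0 = R₁ * Real.log (R₂ / R₁))
    (hσn : ∀ n : ℕ, 1 ≤ n →
      σ n = (R₁ / n) * ((1 - (R₁ / R₂) ^ (2 * n)) / (1 + (R₁ / R₂) ^ (2 * n)))) :
    (∀ n, 0 < σ n) ∧
    (∃ C' : ℝ, 0 < C' ∧ ∀ n : ℕ, σ n ≤ σ 0 * C' / (1 + (n : ℝ))) ∧
    (∃ c C : ℝ, 0 < c ∧ c ≤ C ∧ ∀ n : ℕ,
      c ≤ σ n * Real.sqrt (1 + (n : ℝ) ^ 2) ∧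
      σ n * Real.sqrt (1 + (n : ℝ) ^ 2) ≤ C) := by
  set q := R₁ / R₂
  have hR₂ : 0 < R₂ := h1.trans h12
  have hq₀ : 0 < q := div_pos h1 hR₂
  have hq₁ : q < 1 := (div_lt_one hR₂).2 h12
  have hσ₀ : 0 < σ 0 := hσ0 ▸ mul_pos h1 (Real.log_pos ((one_lt_div h1).2 h12))
  have hc : 0 < R₁ * ((1 - q ^ 2) / 2) := mul_pos h1 (by nlinarith)
  have hlow : ∀ n : ℕ, 1 ≤ n → R₁ * ((1 - q ^ 2) / 2) / n ≤ σ n := fun n hn => by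
    rw [hσn n hn, mul_div_right_comm]
    exact mul_le_mul_of_nonneg_left
      (one_sub_pow_div_one_add_pow_bounds hq₀.le hq₁.le hn).1 (by positivity)
  have hup : ∀ n : ℕ, 1 ≤ n → σ n ≤ R₁ / n := fun n hn => by
    rw [hσn n hn]
    exact mul_le_of_le_one_right (by positivity) (one_sub_pow_div_one_add_pow_bounds hq₀.le hq₁.le hn).2
  refine ⟨pos_of_div_natCast_le hσ₀ hc hlow, ⟨(σ 0 + 2 * R₁) / σ 0, by positivity, fun n => ?_⟩,
    exists_bounds_mul_sqrt_one_add_sq hσ₀ hc hlow hup⟩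
  rw [mul_div_cancel₀ _ hσ₀.ne']
  exact le_div_one_add_of_le_div_natCast hσ₀.le h1.le hup n
end
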